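/- arXiv:1903.06702 — 2 statements merged into one kernel-verified Lean document; each statement's English description precedes it below -/
import Mathlib

section
/- Given a set cover instance (finite set X, family F = {S_1,...,S_T} with union X), construct an order-and-rack allocation instance with one picker, a single order requiring one unit of each product i \in X, and one rack per subset S_t containing one unit of product i iff i \in S_t. Then a collection of racks can supply the order if and only if the corresponding collection of subsets covers X; hence the minimum number of racks needed to supply the order equals the minimum set cover size. -/
open Finset

attribute [local instance] Classical.propDecidable

/-- Set cover reduction: with one rack per subset (containing one unit of product `i` iff
`i ∈ S_t`) and a single order demanding one unit of each product, a collection of racks can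
supply the order iff the corresponding subsets cover `X`; hence the minimum number of racks
needed equals the minimum set cover size. -/
theorem setcover_rack_reduction
    (X : Type) [Fintype X] (T : ℕ) (F : Fin T → Finset X)
    (hcov : ∀ x : X, ∃ t : Fin T, x ∈ F t) :
    (∀ C : Finset (Fin T),
        (∀ i : X, 1 ≤ ∑ t ∈ C, (if i ∈ F t then (1 : ℕ) else 0)) ↔
          (∀ i : X, ∃ t ∈ C, i ∈ F t)) ∧
    sInf {n : ℕ | ∃ C : Finset (Fin T), C.card = n ∧
          ∀ i : X, 1 ≤ ∑ t ∈ C, (if i ∈ F t then (1 : ℕ) else 0)} =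
      sInf {n : ℕ | ∃ C : Finset (Fin T), C.card = n ∧ ∀ i : X, ∃ t ∈ C, i ∈ F t} := by
  have key : ∀ (C : Finset (Fin T)) (i : X),
      (1 ≤ ∑ t ∈ C, (if i ∈ F t then (1 : ℕ) else 0)) ↔ ∃ t ∈ C, i ∈ F t := by
    intro C i
    rw [Finset.sum_boole, Nat.one_le_cast]
    exact Finset.card_pos.trans Finset.filter_nonempty_iff
  constructor
  · intro C
    exact forall_congr' fun i => key C i
  · congr 1
    ext n
    simp only [Set.mem_setOf_eq]
    exact exists_congr fun C => and_congr_right fun _ => forall_congr' fun i => key C i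
end

section
/- If an order o has \sum_i q_{io} = 1, then in any feasible rack sequencing solution order o receives its single unit from exactly one rack position k, and it can without loss of generality be taken that \alpha_{ok} = \beta_{ok} = 1 at that position and \alpha_{on} = \beta_{on} = 0 for all n \ne k (i.e., the order is opened and closed at the same rack). -/
open Finset

attribute [local instance] Classical.propDecidable

/-- If an order `o₀` demands a single unit in total, then in any feasible rack sequencing
solution it receives that unit from exactly one rack position `k`, and one may without loss
of generality take `α o₀ k = β o₀ k = 1` at that position and `0` at all others (opening and
closing the order at the same rack) while preserving all constraints and leaving every other
order's indicators unchanged. -/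
theorem single_unit_order_open_close_same_rack
    (K N O B : ℕ) (q : Fin N → Fin O → ℕ)
    (γ : Fin N → Fin O → Fin K → ℕ) (α β : Fin O → Fin K → ℕ)
    (hα : ∀ o k, α o k ≤ 1) (hβ : ∀ o k, β o k ≤ 1) (hβα : ∀ o k, β o k ≤ α o k)
    -- product only taken while open
    (hlink : ∀ (i : Fin N) (o : Fin O) (k : Fin K), γ i o k ≤ q i o * α o k)
    -- exact fulfilment
    (hdem : ∀ (i : Fin N) (o : Fin O), ∑ k, γ i o k = q i o)
    -- each order closed exactly once
    (hclose : ∀ o : Fin O, ∑ k, β o k = 1)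
    -- contiguity of open intervals
    (hsucc : ∀ (o : Fin O) (k : Fin K), ∀ h : (k : ℕ) + 1 < K,
        α o k - β o k ≤ α o ⟨(k : ℕ) + 1, h⟩)
    (hprev : ∀ (o : Fin O) (k : Fin K),
        α o k + ∑ n ∈ Finset.univ.filter (fun n => n < k), β o n ≤ 1)
    -- bin capacity: at most B - 1 orders open but not closed at each position
    (hbin : ∀ k : Fin K, ∑ o, α o k ≤ (B - 1) + ∑ o, β o k)
    (o₀ : Fin O) (hq : ∑ i, q i o₀ = 1) :
    -- the single unit comes from exactly one position
    (∃! k : Fin K, ∃ i : Fin N, 0 < γ i o₀ k) ∧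
    -- and the indicators of o₀ can be replaced so that it opens and closes at that position
    ∃ α' β' : Fin O → Fin K → ℕ,
      (∀ o : Fin O, o ≠ o₀ → ∀ k, α' o k = α o k ∧ β' o k = β o k) ∧
      (∃ k : Fin K, (∃ i, 0 < γ i o₀ k) ∧ α' o₀ k = 1 ∧ β' o₀ k = 1 ∧
        ∀ n : Fin K, n ≠ k → α' o₀ n = 0 ∧ β' o₀ n = 0) ∧
      (∀ o k, α' o k ≤ 1) ∧ (∀ o k, β' o k ≤ 1) ∧ (∀ o k, β' o k ≤ α' o k) ∧
      (∀ (i : Fin N) (o : Fin O) (k : Fin K), γ i o k ≤ q i o * α' o k) ∧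
      (∀ o : Fin O, ∑ k, β' o k = 1) ∧
      (∀ (o : Fin O) (k : Fin K), ∀ h : (k : ℕ) + 1 < K,
          α' o k - β' o k ≤ α' o ⟨(k : ℕ) + 1, h⟩) ∧
      (∀ (o : Fin O) (k : Fin K),
          α' o k + ∑ n ∈ Finset.univ.filter (fun n => n < k), β' o n ≤ 1) ∧
      (∀ k : Fin K, ∑ o, α' o k ≤ (B - 1) + ∑ o, β' o k) := by
  classical
  have hsum : ∑ k : Fin K, ∑ i, γ i o₀ k = 1 := by
    rw [Finset.sum_comm]; simp_rw [hdem]; exact hq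
  have hex : ∃ k₀ : Fin K, ∑ i, γ i o₀ k₀ ≠ 0 := by
    by_contra h
    push_neg at h
    rw [Finset.sum_eq_zero (fun k _ => h k)] at hsum
    exact one_ne_zero hsum.symm
  obtain ⟨k₀, hk₀⟩ := hex
  have hsplit : (∑ i, γ i o₀ k₀) + ∑ k ∈ Finset.univ.erase k₀, ∑ i, γ i o₀ k
      = ∑ k : Fin K, ∑ i, γ i o₀ k :=
    Finset.add_sum_erase Finset.univ (fun k => ∑ i, γ i o₀ k) (Finset.mem_univ k₀)
  rw [hsum] at hsplit
  have hrest : ∑ k ∈ Finset.univ.erase k₀, ∑ i, γ i o₀ k = 0 := by omega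
  have hzero : ∀ k : Fin K, k ≠ k₀ → ∑ i, γ i o₀ k = 0 := by
    intro k hk
    exact (Finset.sum_eq_zero_iff.mp hrest) k (by simp [hk])
  have hγzero : ∀ (i : Fin N) (k : Fin K), k ≠ k₀ → γ i o₀ k = 0 := by
    intro i k hk
    have h1 : γ i o₀ k ≤ ∑ j, γ j o₀ k :=
      Finset.single_le_sum (f := fun j => γ j o₀ k) (fun j _ => Nat.zero_le _)
        (Finset.mem_univ i)
    rw [hzero k hk] at h1
    omega
  have hpos : ∃ i, 0 < γ i o₀ k₀ := by
    by_contra h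
    push_neg at h
    exact hk₀ (Finset.sum_eq_zero (fun i _ => by have := h i; omega))
  constructor
  · refine ⟨k₀, hpos, ?_⟩
    intro k hk
    obtain ⟨i, hi⟩ := hk
    by_contra hkk
    rw [hγzero i k hkk] at hi
    omega
  · refine ⟨fun o k => if o = o₀ then (if k = k₀ then 1 else 0) else α o k,
      fun o k => if o = o₀ then (if k = k₀ then 1 else 0) else β o k,
      ?_, ?_, ?_, ?_, ?_, ?_, ?_, ?_, ?_, ?_⟩
    · intro o ho k
      exact ⟨if_neg ho, if_neg ho⟩
    · refine ⟨k₀, hpos, by simp, by simp, fun n hn => ⟨by simp [hn], by simp [hn]⟩⟩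
    · intro o k
      beta_reduce
      by_cases ho : o = o₀
      · rw [if_pos ho]; split <;> omega
      · rw [if_neg ho]; exact hα o k
    · intro o k
      beta_reduce
      by_cases ho : o = o₀
      · rw [if_pos ho]; split <;> omega
      · rw [if_neg ho]; exact hβ o k
    · intro o k
      beta_reduce
      by_cases ho : o = o₀
      · rw [if_pos ho, if_pos ho]
      · rw [if_neg ho, if_neg ho]; exact hβα o k
    · intro i o k
      beta_reduce
      by_cases ho : o = o₀
      · rw [if_pos ho]
        by_cases hk : k = k₀
        · rw [if_pos hk, mul_one, ← hdem i o]
          exact Finset.single_le_sum (f := fun n => γ i o n) (fun n _ => Nat.zero_le _)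
            (Finset.mem_univ k)
        · rw [if_neg hk, Nat.mul_zero, ho, hγzero i k hk]
      · rw [if_neg ho]; exact hlink i o k
    · intro o
      beta_reduce
      by_cases ho : o = o₀
      · simp only [if_pos ho]
        rw [Finset.sum_ite_eq' Finset.univ k₀ (fun _ => (1:ℕ))]
        simp
      · simp only [if_neg ho]; exact hclose o
    · intro o k h
      beta_reduce
      by_cases ho : o = o₀
      · simp only [if_pos ho]
        by_cases hk : k = k₀ <;> simp [hk]
      · simp only [if_neg ho]; exact hsucc o k h
    · intro o k
      beta_reduce
      by_cases ho : o = o₀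
      · simp only [if_pos ho]
        rw [Finset.sum_ite_eq' (Finset.univ.filter (fun n => n < k)) k₀ (fun _ => (1:ℕ))]
        by_cases hk : k = k₀
        · rw [if_pos hk, if_neg (by simp [hk])]; omega
        · rw [if_neg hk]; split <;> omega
      · simp only [if_neg ho]; exact hprev o k
    · intro k
      beta_reduce
      have e1 : ∑ o : Fin O, (if o = o₀ then (if k = k₀ then (1:ℕ) else 0) else α o k)
          = (if k = k₀ then 1 else 0) + ∑ o ∈ Finset.univ.erase o₀, α o k := by
        rw [← Finset.add_sum_erase Finset.univ
          (fun o => if o = o₀ then (if k = k₀ then (1:ℕ) else 0) else α o k)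
          (Finset.mem_univ o₀)]
        rw [if_pos rfl]
        congr 1
        exact Finset.sum_congr rfl (fun o ho => if_neg (Finset.ne_of_mem_erase ho))
      have e2 : ∑ o : Fin O, (if o = o₀ then (if k = k₀ then (1:ℕ) else 0) else β o k)
          = (if k = k₀ then 1 else 0) + ∑ o ∈ Finset.univ.erase o₀, β o k := by
        rw [← Finset.add_sum_erase Finset.univ
          (fun o => if o = o₀ then (if k = k₀ then (1:ℕ) else 0) else β o k)
          (Finset.mem_univ o₀)]
        rw [if_pos rfl]
        congr 1
        exact Finset.sum_congr rfl (fun o ho => if_neg (Finset.ne_of_mem_erase ho))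
      have e3 : α o₀ k + ∑ o ∈ Finset.univ.erase o₀, α o k = ∑ o : Fin O, α o k :=
        Finset.add_sum_erase Finset.univ (fun o => α o k) (Finset.mem_univ o₀)
      have e4 : β o₀ k + ∑ o ∈ Finset.univ.erase o₀, β o k = ∑ o : Fin O, β o k :=
        Finset.add_sum_erase Finset.univ (fun o => β o k) (Finset.mem_univ o₀)
      have hb := hbin k
      have hba := hβα o₀ k
      rw [e1, e2]
      omega
end
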